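/- arXiv:1910.12256 — 5 statements merged into one kernel-verified Lean document; each statement's English description precedes it below -/
import Mathlib

section
/- Let Init, Bad be nonempty sets of states (Init ∩ Bad = ∅), and let φ be a set of states with Init ⊆ φ and φ ∩ Bad = ∅. Define the maximal transition relation δ_φ = { (σ,σ') : σ ∈ φ → σ' ∈ φ }. Then φ is the unique inductive invariant of the transition system (Init, δ_φ, Bad). -/
/-- `I` is an inductive invariant of the transition system `(Init, δ, Bad)`. -/
def IsInductiveInvariant {S : Type} (Init Bad : Set S) (δ : Set (S × S)) (I : Set S) : Prop :=
  Init ⊆ I ∧ (∀ σ σ', σ ∈ I → (σ, σ') ∈ δ → σ' ∈ I) ∧ I ∩ Bad = ∅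

/-- The maximal transition relation w.r.t. `φ`: all transitions except those
from `φ` to its complement. -/
def maxRel {S : Type} (φ : Set S) : Set (S × S) := {p | p.1 ∈ φ → p.2 ∈ φ}

/-- For nonempty `Init`, `Bad` with `Init ∩ Bad = ∅`, `Init ⊆ φ` and `φ ∩ Bad = ∅`:
`φ` is the unique inductive invariant of the maximal system `(Init, maxRel φ, Bad)`. -/
theorem maximal_system_unique_invariant {S : Type} (Init Bad φ : Set S)
    (hInit : Init.Nonempty) (hBad : Bad.Nonempty) (hdisj : Init ∩ Bad = ∅)
    (h1 : Init ⊆ φ) (h2 : φ ∩ Bad = ∅) :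
    IsInductiveInvariant Init Bad (maxRel φ) φ ∧
      ∀ I : Set S, IsInductiveInvariant Init Bad (maxRel φ) I → I = φ := by
  constructor
  · exact ⟨h1, fun σ σ' hσ hstep => hstep hσ, h2⟩
  · rintro I ⟨hI1, hI2, hI3⟩
    obtain ⟨b, hb⟩ := hBad
    apply Set.Subset.antisymm
    · intro σ hσ
      by_contra hσφ
      have hbI : b ∈ I := hI2 σ b hσ (fun h => absurd h hσφ)
      exact absurd (Set.mem_inter hbI hb) (by rw [hI3]; exact not_false)
    · intro σ hσ
      obtain ⟨i, hi⟩ := hInit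
      exact hI2 i σ (hI1 hi) (fun _ => hσ)
end

section
/- For the maximal transition system (Init, δ_φ, Bad) with Init ⊆ φ, φ ∩ Bad = ∅, and Init nonempty: the set of states reachable from Init (under δ_φ) is exactly φ, and moreover every state in φ is reachable from Init in at most one step. -/
/-- `σ` is reachable from `Init` under transition relation `δ`. -/
def Reachable {S : Type} (Init : Set S) (δ : Set (S × S)) (σ : S) : Prop :=
  ∃ σ₀ ∈ Init, Relation.ReflTransGen (fun a b => (a, b) ∈ δ) σ₀ σ

/-- In the maximal system: the set of states reachable from `Init` is exactly `φ`,
and every state of `φ` is reachable from `Init` in at most one step. -/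
theorem maximal_system_reachable_eq {S : Type} (Init Bad φ : Set S)
    (hInit : Init.Nonempty) (h1 : Init ⊆ φ) (h2 : φ ∩ Bad = ∅) :
    {σ | Reachable Init (maxRel φ) σ} = φ ∧
      ∀ σ ∈ φ, σ ∈ Init ∨ ∃ σ₀ ∈ Init, (σ₀, σ) ∈ maxRel φ := by
  obtain ⟨σ₀, hσ₀⟩ := hInit
  constructor
  · ext σ
    constructor
    · rintro ⟨τ, hτ, hrt⟩
      induction hrt with
      | refl => exact h1 hτ
      | tail _ hstep ih => exact hstep ih
    · intro hσ
      exact ⟨σ₀, hσ₀, Relation.ReflTransGen.single (fun _ => hσ)⟩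
  · intro σ hσ
    exact Or.inr ⟨σ₀, hσ₀, fun _ => hσ⟩
end

section
/- Whenever a Hoare query H(δ, α, β) returns false (i.e., the formula α ∧ δ ∧ ¬β' is satisfiable), a counterexample pair of states (σ, σ') with σ ⊨ α, (σ,σ') ∈ δ, σ' ⊭ β can be found using at most 2n additional Hoare queries, where n = |Σ| is the number of propositional variables, by iteratively fixing each variable of the pre- and post-state. -/
open Classical in
/-- The Hoare-query oracle: `true` iff every `δ`-transition from a state
satisfying `α` leads to a state satisfying `β`. -/
noncomputable def hoare {V : Type} (δ : Set ((V → Bool) × (V → Bool)))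
    (α β : Set (V → Bool)) : Bool :=
  decide (∀ σ σ', σ ∈ α → (σ, σ') ∈ δ → σ' ∈ β)

/-- A decision tree of Hoare queries, returning a pair of states at its leaves. -/
inductive QTree (V : Type) : Type where
  | ret (σ σ' : V → Bool)
  | query (α β : Set (V → Bool)) (k : Bool → QTree V)

/-- The number of Hoare queries performed in the worst case. -/
def QTree.depth {V : Type} : QTree V → ℕ
  | .ret _ _ => 0
  | .query _ _ k => 1 + max (k true).depth (k false).depth

/-- Running a query tree against a transition relation `δ`. -/
noncomputable def QTree.run {V : Type} (δ : Set ((V → Bool) × (V → Bool))) :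
    QTree V → (V → Bool) × (V → Bool)
  | .ret σ σ' => (σ, σ')
  | .query α β k => (k (hoare δ α β)).run δ

section Aux
variable {V : Type}

open Classical in
/-- classical function update -/
noncomputable def updB (f : V → Bool) (v : V) (b : Bool) : V → Bool :=
  fun u => if u = v then b else f u

/-- the restricted precondition: states in `α` agreeing with `f` off `L` -/
def Apre (α : Set (V → Bool)) (f : V → Bool) (L : List V) : Set (V → Bool) :=
  {σ | σ ∈ α ∧ ∀ v, v ∉ L → σ v = f v}

/-- the weakened postcondition -/
def Bpost (β : Set (V → Bool)) (g : V → Bool) (L : List V) : Set (V → Bool) :=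
  {σ' | σ' ∈ β ∨ ∃ v, v ∉ L ∧ σ' v ≠ g v}

lemma hoare_eq_false {δ : Set ((V → Bool) × (V → Bool))} {A B : Set (V → Bool)} :
    hoare δ A B = false ↔ ∃ σ σ', σ ∈ A ∧ (σ, σ') ∈ δ ∧ σ' ∉ B := by
  classical
  simp only [hoare, decide_eq_false_iff_not]
  push_neg
  tauto

/-- the query tree -/
noncomputable def mkT (α β : Set (V → Bool)) :
    List V → List V → (V → Bool) → (V → Bool) → QTree V
  | [], [], f, g => .ret f g
  | v :: L1, L2, f, g =>
      .query (Apre α (updB f v true) L1) (Bpost β g L2)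
        (fun b => if b then mkT α β L1 L2 (updB f v false) g
                  else mkT α β L1 L2 (updB f v true) g)
  | [], v :: L2, f, g =>
      .query (Apre α f []) (Bpost β (updB g v true) L2)
        (fun b => if b then mkT α β [] L2 f (updB g v false)
                  else mkT α β [] L2 f (updB g v true))

lemma mkT_depth (α β : Set (V → Bool)) :
    ∀ (L1 L2 : List V) f g, (mkT α β L1 L2 f g).depth = L1.length + L2.length
  | [], [], f, g => by simp [mkT, QTree.depth]
  | v :: L1, L2, f, g => by
      simp [mkT, QTree.depth, mkT_depth α β L1 L2]
      omega
  | [], v :: L2, f, g => by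
      simp [mkT, QTree.depth, mkT_depth α β [] L2]
      omega

lemma mem_Apre_upd {α : Set (V → Bool)} {f σ : V → Bool} {v : V} {L : List V}
    (h : σ ∈ Apre α f (v :: L)) (hb : σ v = b) :
    σ ∈ Apre α (updB f v b) L := by
  classical
  refine ⟨h.1, fun u hu => ?_⟩
  by_cases huv : u = v
  · subst huv; simp [updB, hb]
  · have : u ∉ v :: L := by simp [huv, hu]
    simp [updB, huv, h.2 u this]

lemma not_mem_Bpost {β : Set (V → Bool)} {g σ' : V → Bool} {L : List V} :
    σ' ∉ Bpost β g L ↔ σ' ∉ β ∧ ∀ v, v ∉ L → σ' v = g v := by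
  simp only [Bpost, Set.mem_setOf_eq]
  push_neg
  rfl

lemma not_mem_Bpost_upd {β : Set (V → Bool)} {g σ' : V → Bool} {v : V} {L : List V}
    (h : σ' ∉ Bpost β g (v :: L)) (hb : σ' v = b) :
    σ' ∉ Bpost β (updB g v b) L := by
  classical
  rw [not_mem_Bpost] at h ⊢
  refine ⟨h.1, fun u hu => ?_⟩
  by_cases huv : u = v
  · subst huv; simp [updB, hb]
  · have : u ∉ v :: L := by simp [huv, hu]
    simp [updB, huv, h.2 u this]

lemma mkT_run (α β : Set (V → Bool)) (δ : Set ((V → Bool) × (V → Bool))) :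
    ∀ (L1 L2 : List V) (f g : V → Bool),
    hoare δ (Apre α f L1) (Bpost β g L2) = false →
    ((mkT α β L1 L2 f g).run δ).1 ∈ α ∧
      (((mkT α β L1 L2 f g).run δ).1, ((mkT α β L1 L2 f g).run δ).2) ∈ δ ∧
      ((mkT α β L1 L2 f g).run δ).2 ∉ β
  | [], [], f, g, h => by
      simp only [mkT, QTree.run]
      obtain ⟨σ, σ', hσ, hδ, hσ'⟩ := hoare_eq_false.mp h
      rw [not_mem_Bpost] at hσ'
      have hf : σ = f := funext fun v => hσ.2 v (by simp)
      have hg : σ' = g := funext fun v => hσ'.2 v (by simp)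
      subst hf; subst hg
      exact ⟨hσ.1, hδ, hσ'.1⟩
  | v :: L1, L2, f, g, h => by
      rw [mkT]
      by_cases hq : hoare δ (Apre α (updB f v true) L1) (Bpost β g L2) = false
      · simp only [QTree.run, hq, Bool.false_eq_true, if_false]
        exact mkT_run α β δ L1 L2 (updB f v true) g hq
      · rw [Bool.not_eq_false] at hq
        simp only [QTree.run, hq, if_true]
        apply mkT_run α β δ L1 L2 (updB f v false) g
        obtain ⟨σ, σ', hσ, hδ, hσ'⟩ := hoare_eq_false.mp h
        have hv : σ v = false := by
          by_contra hvt
          rw [Bool.not_eq_false] at hvt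
          have : σ ∈ Apre α (updB f v true) L1 := mem_Apre_upd hσ hvt
          exact absurd (hoare_eq_false.mpr ⟨σ, σ', this, hδ, hσ'⟩)
            (by simp [hq])
        exact hoare_eq_false.mpr ⟨σ, σ', mem_Apre_upd hσ hv, hδ, hσ'⟩
  | [], v :: L2, f, g, h => by
      rw [mkT]
      by_cases hq : hoare δ (Apre α f []) (Bpost β (updB g v true) L2) = false
      · simp only [QTree.run, hq, Bool.false_eq_true, if_false]
        exact mkT_run α β δ [] L2 f (updB g v true) hq
      · rw [Bool.not_eq_false] at hq
        simp only [QTree.run, hq, if_true]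
        apply mkT_run α β δ [] L2 f (updB g v false)
        obtain ⟨σ, σ', hσ, hδ, hσ'⟩ := hoare_eq_false.mp h
        have hv : σ' v = false := by
          by_contra hvt
          rw [Bool.not_eq_false] at hvt
          have : σ' ∉ Bpost β (updB g v true) L2 := not_mem_Bpost_upd hσ' hvt
          exact absurd (hoare_eq_false.mpr ⟨σ, σ', hσ, hδ, this⟩)
            (by simp [hq])
        exact hoare_eq_false.mpr ⟨σ, σ', hσ, hδ, not_mem_Bpost_upd hσ' hv⟩

end Aux

/-- Whenever the Hoare query `H(δ, α, β)` returns false, a counterexample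
transition `(σ, σ')` with `σ ⊨ α`, `(σ,σ') ∈ δ`, `σ' ⊭ β` can be found using at
most `2n` additional Hoare queries (`n` the number of variables), by iteratively
fixing each variable of the pre- and post-state. -/
theorem counterexample_in_2n_hoare_queries {V : Type} [Fintype V]
    (α β : Set (V → Bool)) :
    ∃ T : QTree V, T.depth ≤ 2 * Fintype.card V ∧
      ∀ δ : Set ((V → Bool) × (V → Bool)), hoare δ α β = false →
        (T.run δ).1 ∈ α ∧ ((T.run δ).1, (T.run δ).2) ∈ δ ∧ (T.run δ).2 ∉ β := by
  classical
  set L := (Finset.univ : Finset V).toList with hL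
  refine ⟨mkT α β L L (fun _ => true) (fun _ => true), ?_, ?_⟩
  · rw [mkT_depth]
    have : L.length = Fintype.card V := by
      simp [hL, Finset.length_toList, Finset.card_univ]
    omega
  · intro δ hδ
    apply mkT_run
    have hA : Apre α (fun _ => true) L = α := by
      ext σ; simp [Apre, hL, Finset.mem_toList]
    have hB : Bpost β (fun _ => true) L = β := by
      ext σ; simp [Bpost, hL, Finset.mem_toList]
    rw [hA, hB]
    exact hδ
end

section
/- If the quantified Boolean formula ∃y.∀x.φ(y,x) (with |y| = |x| = k) is false, then the transition system TS_φ ∈ P_Σ2^k is unsafe: starting from Init_k, after iterating through all 2^k values of y (each with all 2^k values of x), the error bit e becomes true. -/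
/-- A state of the transition system `TS_φ`: two `k`-bit vectors `y, x` and
three flags `a, b, e`. -/
structure St (k : ℕ) where
  y : Fin k → Bool
  x : Fin k → Bool
  a : Bool
  b : Bool
  e : Bool

/-- The numeric value of a bit-vector (bit `i` has weight `2^i`). -/
def bvToNat {k : ℕ} (v : Fin k → Bool) : ℕ :=
  ∑ i : Fin k, if v i then 2 ^ (i : ℕ) else 0

/-- The bit-vector of a natural number. -/
def natToBv (k : ℕ) (m : ℕ) : Fin k → Bool := fun i => m.testBit i

/-- One (deterministic) step of `TS_φ`: evaluate `φ(y,x)`; if false set `a := true`;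
at `x = 1…1`, if `a` is still false set `b := false`; at `x = 1…1` increment `y`
(lexicographically), reset `a` and set `x := 0`, otherwise increment `x`;
at the end of the whole iteration (`y = 1…1` and `x = 1…1` in the pre-state)
set `e := b`. -/
def step {k : ℕ} (φ : (Fin k → Bool) → (Fin k → Bool) → Bool) (s : St k) : St k :=
  let a1 : Bool := if φ s.y s.x then s.a else true
  let xmax : Bool := decide (∀ i, s.x i = true)
  let ymax : Bool := decide (∀ i, s.y i = true)
  let b1 : Bool := if xmax && !a1 then false else s.b
  { y := if xmax then natToBv k (bvToNat s.y + 1) else s.y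
    x := if xmax then (fun _ => false) else natToBv k (bvToNat s.x + 1)
    a := if xmax then false else a1
    b := b1
    e := if xmax && ymax then b1 else s.e }

/-- The initial states of `TS_φ`: `y = 0`, `x = 0`, `a = false`, `b = true`, `e = false`. -/
def InitSt (k : ℕ) : Set (St k) :=
  {s | s.y = (fun _ => false) ∧ s.x = (fun _ => false) ∧
       s.a = false ∧ s.b = true ∧ s.e = false}

/-- The bad states of `TS_φ`: `e = true`. -/
def BadSt (k : ℕ) : Set (St k) := {s | s.e = true}

/-- The transition relation of `TS_φ`. -/
def delta {k : ℕ} (φ : (Fin k → Bool) → (Fin k → Bool) → Bool) : Set (St k × St k) :=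
  {p | p.2 = step φ p.1}

/-- Reachability in `TS_φ`. -/
def Reach {k : ℕ} (φ : (Fin k → Bool) → (Fin k → Bool) → Bool) (s : St k) : Prop :=
  ∃ s₀ ∈ InitSt k, Relation.ReflTransGen (fun u v => (u, v) ∈ delta φ) s₀ s

/-! While `y` is fixed, the system sweeps `x` through `0, …, 2^k - 1`. The flag `a` becomes
true as soon as `φ(y, ·)` is falsified, so if `φ(y, ·)` has a falsifier, `a` is true when `x`
reaches `1…1` and `b` stays true. When every `y` has a falsifier, `b` is therefore still true at
the end of the sweep with `y = 1…1`, which copies it into `e`. -/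

lemma bvToNat_succ {k : ℕ} (v : Fin (k + 1) → Bool) :
    bvToNat v = Nat.bit (v 0) (bvToNat fun j : Fin k => v j.succ) := by
  have hshift (j : Fin k) : (if v j.succ then 2 ^ ((j.succ : Fin (k + 1)) : ℕ) else 0)
      = 2 * (if v j.succ then 2 ^ (j : ℕ) else 0) := by
    split_ifs <;> simp [pow_succ, mul_comm]
  rw [Nat.bit_val, bvToNat, Fin.sum_univ_succ, bvToNat, Finset.mul_sum,
    Finset.sum_congr rfl fun j _ => hshift j]
  cases v 0 <;> simp [add_comm]

lemma testBit_bvToNat {k : ℕ} (v : Fin k → Bool) (i : ℕ) :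
    (bvToNat v).testBit i = if h : i < k then v ⟨i, h⟩ else false := by
  induction k generalizing i with
  | zero => simp [bvToNat]
  | succ k ih =>
    rw [bvToNat_succ]
    cases i with
    | zero => simp
    | succ i => simp [Nat.testBit_bit_succ, ih, Fin.succ]

lemma bvToNat_lt_two_pow {k : ℕ} (v : Fin k → Bool) : bvToNat v < 2 ^ k := by
  induction k with
  | zero => simp [bvToNat]
  | succ k ih => simpa [bvToNat_succ] using ih _

lemma natToBv_bvToNat {k : ℕ} (v : Fin k → Bool) : natToBv k (bvToNat v) = v := by
  funext i
  simp [natToBv, testBit_bvToNat]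

lemma bvToNat_natToBv {k j : ℕ} (hj : j < 2 ^ k) : bvToNat (natToBv k j) = j := by
  refine Nat.eq_of_testBit_eq fun i => ?_
  rw [testBit_bvToNat]
  split_ifs with h
  · rfl
  · exact (Nat.testBit_lt_two_pow (hj.trans_le (Nat.pow_le_pow_right two_pos (not_lt.1 h)))).symm

lemma natToBv_zero (k : ℕ) : natToBv k 0 = fun _ => false := by
  funext i
  simp [natToBv]

lemma natToBv_eq_true_iff {k j : ℕ} (hj : j < 2 ^ k) :
    (∀ i : Fin k, natToBv k j i = true) ↔ j = 2 ^ k - 1 := by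
  have hlast : 2 ^ k - 1 < 2 ^ k := Nat.sub_one_lt (Nat.two_pow_pos k).ne'
  constructor
  · intro hall
    rw [← bvToNat_natToBv hj, ← bvToNat_natToBv hlast]
    congr 1
    funext i
    exact (hall i).trans (by simp [natToBv, Nat.testBit_two_pow_sub_one])
  · rintro rfl i
    simp [natToBv, Nat.testBit_two_pow_sub_one]

section Sweep

variable {k : ℕ} (φ : (Fin k → Bool) → (Fin k → Bool) → Bool)

abbrev Steps : St k → St k → Prop :=
  Relation.ReflTransGen fun u v => (u, v) ∈ delta φ

def FalsifiedOrAhead (y : Fin k → Bool) (a : Bool) (j : ℕ) : Prop :=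
  a = true ∨ ∃ x, j ≤ bvToNat x ∧ φ y x = false

variable {φ}

lemma FalsifiedOrAhead.succ {y : Fin k → Bool} {a : Bool} {j : ℕ}
    (hinv : FalsifiedOrAhead φ y a j) :
    FalsifiedOrAhead φ y (if φ y (natToBv k j) then a else true) (j + 1) := by
  rcases hinv with rfl | ⟨x, hle, hx⟩
  · left
    split <;> rfl
  · rcases hle.eq_or_lt with rfl | hlt
    · left
      simp [natToBv_bvToNat, hx]
    · exact Or.inr ⟨x, hlt, hx⟩

lemma FalsifiedOrAhead.eq_true {y : Fin k → Bool} {a : Bool} {j : ℕ}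
    (hinv : FalsifiedOrAhead φ y a j) (hj : 2 ^ k ≤ j) : a = true :=
  hinv.resolve_right fun ⟨x, hle, _⟩ => (bvToNat_lt_two_pow x).not_ge (hj.trans hle)

lemma step_of_succ_lt_two_pow {y : Fin k → Bool} {j : ℕ} (hj : j + 1 < 2 ^ k) (a e : Bool) :
    step φ ⟨y, natToBv k j, a, true, e⟩
      = ⟨y, natToBv k (j + 1), if φ y (natToBv k j) then a else true, true, e⟩ := by
  have hnot : ¬ ∀ i, natToBv k j i = true := by
    rw [natToBv_eq_true_iff (by omega)]
    omega
  simp [step, hnot, bvToNat_natToBv (by omega : j < 2 ^ k)]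

lemma step_two_pow_sub_one {y : Fin k → Bool} {a : Bool} (e : Bool)
    (ha : (if φ y (natToBv k (2 ^ k - 1)) then a else true) = true) :
    step φ ⟨y, natToBv k (2 ^ k - 1), a, true, e⟩
      = ⟨natToBv k (bvToNat y + 1), fun _ => false, false, true,
          decide (∀ i, y i = true) || e⟩ := by
  have hall : ∀ i, natToBv k (2 ^ k - 1) i = true :=
    (natToBv_eq_true_iff (Nat.sub_one_lt (Nat.two_pow_pos k).ne')).2 rfl
  simp [step, hall, ha, Bool.or_comm]

theorem steps_sweep_x {y : Fin k → Bool} {a : Bool} (e : Bool) {j : ℕ} (hj : j < 2 ^ k)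
    (hinv : FalsifiedOrAhead φ y a j) :
    Steps φ ⟨y, natToBv k j, a, true, e⟩
      ⟨natToBv k (bvToNat y + 1), fun _ => false, false, true,
        decide (∀ i, y i = true) || e⟩ := by
  rcases (Nat.le_sub_one_of_lt hj).eq_or_lt with rfl | hlt
  · exact .single (step_two_pow_sub_one e (hinv.succ.eq_true (by omega))).symm
  · exact .head (step_of_succ_lt_two_pow (by omega) a e).symm
      (steps_sweep_x e (by omega) hinv.succ)
termination_by 2 ^ k - j

theorem exists_steps_to_bad (h : ∀ y, ∃ x, φ y x = false) {j : ℕ} (hj : j < 2 ^ k) :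
    ∃ s, Steps φ ⟨natToBv k j, fun _ => false, false, true, false⟩ s ∧ s ∈ BadSt k := by
  obtain ⟨x, hx⟩ := h (natToBv k j)
  have hsweep :=
    steps_sweep_x (a := false) false (Nat.two_pow_pos k) (.inr ⟨x, Nat.zero_le _, hx⟩)
  rw [natToBv_zero, bvToNat_natToBv hj] at hsweep
  by_cases hlast : j = 2 ^ k - 1
  · exact ⟨_, hsweep, by simp [BadSt, (natToBv_eq_true_iff hj).2 hlast]⟩
  · obtain ⟨s, hs, hbad⟩ := exists_steps_to_bad h (j := j + 1) (by omega)
    refine ⟨s, hsweep.trans ?_, hbad⟩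
    simpa [(natToBv_eq_true_iff hj).not.2 hlast] using hs
termination_by 2 ^ k - j

end Sweep

/-- If `∃y.∀x.φ(y,x)` is false (every `y` has a falsifying `x`), then `TS_φ` is
unsafe: a bad state (with `e = true`) is reachable from the initial states. -/
theorem tsPhi_unsafe_of_qbf_false (k : ℕ)
    (φ : (Fin k → Bool) → (Fin k → Bool) → Bool)
    (h : ∀ y, ∃ x, φ y x = false) :
    ∃ s : St k, Reach φ s ∧ s ∈ BadSt k := by
  obtain ⟨s, hs, hbad⟩ := exists_steps_to_bad h (Nat.two_pow_pos k)
  exact ⟨s, ⟨_, ⟨natToBv_zero k, rfl, rfl, rfl, rfl⟩, hs⟩, hbad⟩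
end

section
/- In the PDR-1 blocking procedure applied to a state σ ⊭ φ (where φ is the set of states reachable in ≤ 1 step, given as a monotone CNF formula), the returned conjunction d satisfies: ¬d is a prime consequence of φ, hence a clause of φ. -/
/-- A valuation of propositional variables. -/
abbrev State (V : Type) := V → Bool

/-- Satisfaction of a clause (a finite set of literals; a literal is a variable
with a polarity, `true` = positive). -/
def satClause {V : Type} (σ : State V) (c : Finset (V × Bool)) : Prop :=
  ∃ l ∈ c, σ l.1 = l.2

/-- Satisfaction of a CNF formula. -/
def satCNF {V : Type} (σ : State V) (φ : Finset (Finset (V × Bool))) : Prop :=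
  ∀ c ∈ φ, satClause σ c

/-- A CNF formula is monotone if all literals of all clauses are negative. -/
def MonotoneCNF {V : Type} (φ : Finset (Finset (V × Bool))) : Prop :=
  ∀ c ∈ φ, ∀ l ∈ c, l.2 = false

/-- Consequence of a CNF formula. -/
def Consequence {V : Type} (φ : Finset (Finset (V × Bool))) (c : Finset (V × Bool)) : Prop :=
  ∀ σ : State V, satCNF σ φ → satClause σ c

/-- Satisfaction of a cube (conjunction of literals). -/
def satCube {V : Type} (σ : State V) (d : Finset (V × Bool)) : Prop :=
  ∀ l ∈ d, σ l.1 = l.2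

/-- The cube of a state: the conjunction of all literals that hold in it. -/
def cubeF {V : Type} [Fintype V] [DecidableEq V] (σ : State V) : Finset (V × Bool) :=
  Finset.univ.image (fun v => (v, σ v))

open Classical in
/-- The Block-PDR-1 generalization: iterate over the literals (in the order given
by the list), dropping a literal whenever the predicate `P` holds of the reduced
conjunction. -/
noncomputable def block {V : Type} [DecidableEq V] (P : Finset (V × Bool) → Prop) :
    List (V × Bool) → Finset (V × Bool) → Finset (V × Bool)
  | [], d => d
  | l :: ls, d => block P ls (if P (d.erase l) then d.erase l else d)

theorem block_spec {V : Type} [DecidableEq V] (P : Finset (V × Bool) → Prop)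
    (Pmono : ∀ s t : Finset (V × Bool), s ⊆ t → P s → P t) :
    ∀ (L : List (V × Bool)) (d : Finset (V × Bool)), P d →
      block P L d ⊆ d ∧ P (block P L d) ∧
      ∀ l ∈ block P L d, l ∈ L → ¬ P ((block P L d).erase l) := by
  intro L
  induction L with
  | nil => intro d hd; exact ⟨Finset.Subset.refl _, hd, by simp⟩
  | cons l ls ih =>
    intro d hd
    simp only [block]
    by_cases h : P (d.erase l)
    · rw [if_pos h]
      obtain ⟨hsub, hPe, hmin⟩ := ih (d.erase l) h
      refine ⟨hsub.trans (Finset.erase_subset _ _), hPe, ?_⟩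
      intro m hm hmL
      rcases List.mem_cons.mp hmL with rfl | hmls
      · exact absurd (hsub hm) (Finset.notMem_erase _ _)
      · exact hmin m hm hmls
    · rw [if_neg h]
      obtain ⟨hsub, hPe, hmin⟩ := ih d hd
      refine ⟨hsub, hPe, ?_⟩
      intro m hm hmL
      rcases List.mem_cons.mp hmL with rfl | hmls
      · intro hPm
        exact h (Pmono _ _ (Finset.erase_subset_erase _ hsub) hPm)
      · exact hmin m hm hmls

/-- For a state `σ ⊭ φ` (with `φ` a monotone CNF formula describing the states
reachable in at most one step, so the drop test `P t` holds iff no state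
satisfying `φ` satisfies `t`), the conjunction `d` returned by Block-PDR-1
satisfies: `¬d` is a prime consequence of `φ`, hence a clause of `φ`. -/
theorem block_returns_clause_of_phi {V : Type} [Fintype V] [DecidableEq V]
    (φ : Finset (Finset (V × Bool))) (hmono : MonotoneCNF φ)
    (σ : State V) (hσ : ¬ satCNF σ φ)
    (P : Finset (V × Bool) → Prop)
    (hP : ∀ t, P t ↔ ∀ τ : State V, satCNF τ φ → ¬ satCube τ t)
    (L : List (V × Bool)) (hnd : L.Nodup) (hLset : L.toFinset = cubeF σ) :
    Consequence φ ((block P L (cubeF σ)).image (fun l => (l.1, !l.2))) ∧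
    (∀ c' ⊂ (block P L (cubeF σ)).image (fun l => (l.1, !l.2)),
        ¬ Consequence φ c') ∧
    (block P L (cubeF σ)).image (fun l => (l.1, !l.2)) ∈ φ := by
  classical
  have Pmono : ∀ s t : Finset (V × Bool), s ⊆ t → P s → P t := by
    intro s t hst hs
    rw [hP] at hs ⊢
    intro τ hτ hcube
    exact hs τ hτ (fun l hl => hcube l (hst hl))
  have hP0 : P (cubeF σ) := by
    rw [hP]
    intro τ hτ hcube
    have hτσ : τ = σ := by
      funext v
      exact hcube (v, σ v) (Finset.mem_image.mpr ⟨v, Finset.mem_univ v, rfl⟩)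
    exact hσ (hτσ ▸ hτ)
  obtain ⟨hsub, hPe, hmin⟩ := block_spec P Pmono L (cubeF σ) hP0
  generalize hE : block P L (cubeF σ) = e at *
  set c := e.image (fun l => (l.1, !l.2)) with hc
  have hev : ∀ l ∈ e, l.2 = σ l.1 := by
    intro l hl
    have := hsub hl
    simp only [cubeF, Finset.mem_image] at this
    obtain ⟨v, _, rfl⟩ := this
    rfl
  have hmin' : ∀ l ∈ e, ¬ P (e.erase l) := by
    intro l hl
    apply hmin l hl
    rw [← List.mem_toFinset, hLset]
    exact hsub hl
  -- Part 1: Consequence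
  have part1 : Consequence φ c := by
    intro τ hτ
    rw [hP] at hPe
    have := hPe τ hτ
    simp only [satCube, not_forall] at this
    obtain ⟨l, hl, hne⟩ := this
    refine ⟨(l.1, !l.2), Finset.mem_image.mpr ⟨l, hl, rfl⟩, ?_⟩
    show τ l.1 = !l.2
    revert hne
    cases τ l.1 <;> cases l.2 <;> simp
  -- Part 2: primeness
  have part2 : ∀ c' ⊂ c, ¬ Consequence φ c' := by
    intro c' hc' hcons
    have hc'sub := hc'.subset
    obtain ⟨m, hmc, hmc'⟩ := Finset.exists_of_ssubset hc'
    obtain ⟨l, hl, rfl⟩ := Finset.mem_image.mp hmc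
    have hnp := hmin' l hl
    rw [hP] at hnp
    push_neg at hnp
    obtain ⟨τ, hτφ, hτcube⟩ := hnp
    obtain ⟨k, hkc', hk⟩ := hcons τ hτφ
    obtain ⟨j, hj, rfl⟩ := Finset.mem_image.mp (hc'sub hkc')
    have hjl : j ≠ l := by
      rintro rfl; exact hmc' hkc'
    have h1 : τ j.1 = j.2 := hτcube j (Finset.mem_erase.mpr ⟨hjl, hj⟩)
    have h2 : τ j.1 = !j.2 := hk
    rw [h1] at h2
    exact absurd h2 (by cases j.2 <;> simp)
  refine ⟨part1, part2, ?_⟩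
  -- all literals of c are negative
  have hneg : ∀ m ∈ c, m.2 = false := by
    intro m hm
    by_contra hpos
    obtain ⟨l, hl, rfl⟩ := Finset.mem_image.mp hm
    have hl2 : l.2 = false := by
      rcases Bool.eq_false_or_eq_true l.2 with h | h
      · exact absurd (show ((l.1, !l.2) : V × Bool).2 = false by
          show (!l.2) = false; rw [h, Bool.not_true]) hpos
      · exact h
    apply part2 (c.erase (l.1, !l.2)) (Finset.erase_ssubset hm)
    intro τ hτ
    obtain ⟨τ', hτ'v, hτ'other⟩ :
        ∃ τ' : State V, τ' l.1 = false ∧ ∀ u, u ≠ l.1 → τ' u = τ u :=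
      ⟨fun u => if u = l.1 then false else τ u, if_pos rfl, fun u hu => if_neg hu⟩
    have hτ'φ : satCNF τ' φ := by
      intro cφ hcφ
      obtain ⟨k, hk, hkval⟩ := hτ cφ hcφ
      have hkneg := hmono cφ hcφ k hk
      refine ⟨k, hk, ?_⟩
      rw [hkneg]
      by_cases h : k.1 = l.1
      · rw [h, hτ'v]
      · rw [hτ'other k.1 h, hkval, hkneg]
    obtain ⟨k, hkc, hkval⟩ := part1 τ' hτ'φ
    have hkne : k ≠ (l.1, !l.2) := by
      rintro rfl
      have : τ' l.1 = !l.2 := hkval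
      rw [hτ'v, hl2] at this
      exact Bool.false_ne_true this
    refine ⟨k, Finset.mem_erase.mpr ⟨hkne, hkc⟩, ?_⟩
    by_cases h : k.1 = l.1
    · exfalso
      obtain ⟨j, hj, hjk⟩ := Finset.mem_image.mp hkc
      have hjσ := hev j hj
      have hlσ := hev l hl
      have h1 : j.1 = l.1 := by rw [← h, ← hjk]
      have h2 : j.2 = l.2 := by rw [hjσ, hlσ, h1]
      have hjl : j = l := Prod.ext h1 h2
      subst hjl
      exact hkne hjk.symm
    · rw [hτ'other k.1 h] at hkval
      exact hkval
  -- monotone prime consequence: c ∈ φ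
  obtain ⟨τ₀, hτ₀spec⟩ : ∃ τ₀ : State V, ∀ v, τ₀ v = true ↔ (v, false) ∈ c :=
    ⟨fun v => decide ((v, false) ∈ c), fun v => by simp⟩
  have hτ₀c : ¬ satClause τ₀ c := by
    rintro ⟨m, hm, hval⟩
    have hm2 := hneg m hm
    rw [hm2] at hval
    have hmem : ((m.1, false) : V × Bool) ∈ c := by
      have hme : m = (m.1, false) := Prod.ext rfl hm2
      rwa [hme] at hm
    rw [(hτ₀spec m.1).mpr hmem] at hval
    exact Bool.noConfusion hval
  have hτ₀φ : ¬ satCNF τ₀ φ := fun h => hτ₀c (part1 τ₀ h)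
  simp only [satCNF, not_forall] at hτ₀φ
  obtain ⟨c₀, hc₀φ, hc₀⟩ := hτ₀φ
  have hc₀sub : c₀ ⊆ c := by
    intro m hm
    have hmneg := hmono c₀ hc₀φ m hm
    have hne : τ₀ m.1 ≠ m.2 := fun h => hc₀ ⟨m, hm, h⟩
    rw [hmneg] at hne
    have ht : τ₀ m.1 = true := by
      rcases Bool.eq_false_or_eq_true (τ₀ m.1) with h | h
      · exact h
      · exact absurd h hne
    have hmem := (hτ₀spec m.1).mp ht
    have hme : m = (m.1, false) := Prod.ext rfl hmneg
    rwa [← hme] at hmem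
  have hceq : c₀ = c := by
    by_contra hne
    exact part2 c₀ (lt_of_le_of_ne hc₀sub hne) (fun τ hτ => hτ c₀ hc₀φ)
  rwa [← hceq]
end
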